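/- arXiv:2503.16080 — 3 statements merged into one kernel-verified Lean document; each statement's English description precedes it below -/
import Mathlib

section
/- Let N ≥ 1 be a power of two, R = ℤ[X]/(X^N + 1), and for 0 ≤ t < N let σ_t : R → R be the ring homomorphism determined by X ↦ X^{2t+1}. For each 0 ≤ t < N let u_t be the unique integer with 0 ≤ u_t < 2N and u_t·(2t+1) ≡ 1 (mod 2N). Let m_0, …, m_{N−1} ∈ R with power-basis coordinates m_{i,l} ∈ ℤ. Then for every j with 1 ≤ j ≤ N−1: −Σ_{t=0}^{N−1} X^{j(2t+1)} · σ_t( Σ_{i=0}^{N−1} X^{i·u_t}·m_i ) = N · Σ_{i=0}^{N−1} m_{i,N−j}·X^i in R. -/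
open Polynomial Finset

/-- `Rq N` is the ring `ℤ[X]/(X^N + 1)`. -/
abbrev Rq (N : ℕ) : Type := AdjoinRoot ((X : ℤ[X]) ^ N + 1)

/-- The image of the indeterminate `X` in `ℤ[X]/(X^N + 1)`. -/
noncomputable def rx (N : ℕ) : Rq N := AdjoinRoot.root _

lemma key_sum {R : Type*} [CommRing R] :
    ∀ (μ : ℕ) (y : R) (k : ℕ), y ^ (2^μ) = -1 → ¬ (2^μ ∣ k) →
      ∑ t ∈ Finset.range (2^μ), y ^ (2*k*t) = 0 := by
  intro μ
  induction μ with
  | zero => intro y k _ hk; exact absurd (one_dvd k) hk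
  | succ μ ih =>
    intro y k hy hk
    have h2 : 2 ^ (μ+1) = 2^μ + 2^μ := by ring
    rw [h2, Finset.sum_range_add]
    have hsplit : ∀ t : ℕ, y ^ (2*k*(2^μ + t)) = (-1:R)^k * y^(2*k*t) := by
      intro t
      have he : 2*k*(2^μ + t) = (2^(μ+1))*k + 2*k*t := by ring
      rw [he, pow_add, pow_mul, hy]
    rcases Nat.even_or_odd k with he | ho
    · obtain ⟨k', rfl⟩ := he
      have hk' : ¬ (2^μ ∣ k') := by
        rintro ⟨d, rfl⟩; exact hk ⟨d, by ring⟩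
      have hy2 : (y^2) ^ (2^μ) = -1 := by
        rw [← pow_mul, show 2 * 2^μ = 2^(μ+1) by ring]; exact hy
      have h0 : ∑ t ∈ Finset.range (2^μ), (y^2) ^ (2*k'*t) = 0 := ih (y^2) k' hy2 hk'
      have heq : ∀ t : ℕ, y ^ (2*(k'+k')*t) = (y^2)^(2*k'*t) := by
        intro t; rw [← pow_mul]; ring_nf
      have h1 : ∑ t ∈ Finset.range (2^μ), y ^ (2*(k'+k')*t) = 0 := by
        rw [Finset.sum_congr rfl fun t _ => heq t]; exact h0
      simp only [hsplit, Even.neg_one_pow ⟨k', rfl⟩, one_mul]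
      rw [h1]; simp
    · simp only [hsplit, Odd.neg_one_pow ho, neg_one_mul]
      rw [Finset.sum_neg_distrib]
      ring

/-- Cleartext correctness of the Transpose algorithm (case `1 ≤ j ≤ N-1`).
For `N` a power of two, `σ t` the ring homomorphism `X ↦ X^(2t+1)` of
`R = ℤ[X]/(X^N+1)`, `u t` the unique `0 ≤ u_t < 2N` with
`u_t·(2t+1) ≡ 1 (mod 2N)`, and `m 0, …, m (N-1) ∈ R` with power-basis
coordinates `c i l`:
`-∑_t X^(j(2t+1)) · σ_t(∑_i X^(i·u_t)·m_i) = N · ∑_i m_{i,N-j}·X^i`. -/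
theorem stmt11 (N : ℕ) (hN1 : 1 ≤ N) (hN : ∃ κ : ℕ, N = 2 ^ κ)
    (σ : ℕ → (Rq N →+* Rq N))
    (hσ : ∀ t < N, σ t (rx N) = rx N ^ (2 * t + 1))
    (u : ℕ → ℕ)
    (hu : ∀ t < N, u t < 2 * N ∧ u t * (2 * t + 1) ≡ 1 [MOD 2 * N])
    (m : ℕ → Rq N) (c : ℕ → ℕ → ℤ)
    (hm : ∀ i < N, m i = ∑ l ∈ Finset.range N, c i l • rx N ^ l)
    (j : ℕ) (hj1 : 1 ≤ j) (hj2 : j ≤ N - 1) :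
    -(∑ t ∈ Finset.range N, rx N ^ (j * (2 * t + 1)) *
        σ t (∑ i ∈ Finset.range N, rx N ^ (i * u t) * m i))
      = (N : ℤ) • ∑ i ∈ Finset.range N, c i (N - j) • rx N ^ i := by
  obtain ⟨κ, hκ⟩ := hN
  set x : Rq N := rx N with hxdef
  have hjN : j ≤ N := le_trans hj2 (Nat.sub_le N 1)
  -- x ^ N = -1
  have hxN : x ^ N = -1 := by
    have h0 : AdjoinRoot.mk ((X:ℤ[X])^N + 1) ((X:ℤ[X])^N + 1) = 0 :=
      AdjoinRoot.mk_self
    rw [map_add, map_pow, AdjoinRoot.mk_X, map_one] at h0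
    have : x ^ N + 1 = 0 := h0
    linear_combination this
  have hx2N : x ^ (2*N) = 1 := by
    rw [two_mul, pow_add, hxN]; ring
  have hxm : ∀ a : ℕ, x ^ a = x ^ (a % (2*N)) := by
    intro a
    conv_lhs => rw [← Nat.div_add_mod a (2*N)]
    rw [pow_add, pow_mul, hx2N, one_pow, one_mul]
  have hxmod : ∀ a b : ℕ, a ≡ b [MOD 2*N] → x ^ a = x ^ b := by
    intro a b h
    rw [hxm a, hxm b]
    exact congrArg (x ^ ·) h
  -- the character sum
  have hT : ∀ l ∈ Finset.range N, (∑ t ∈ Finset.range N, x ^ ((j+l)*(2*t+1)))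
      = if l = N - j then -(N : Rq N) else 0 := by
    intro l hl
    rw [Finset.mem_range] at hl
    have hstep : ∀ t : ℕ, x ^ ((j+l)*(2*t+1)) = x ^ (2*(j+l)*t) * x ^ (j+l) := by
      intro t; rw [← pow_add]; ring_nf
    rw [Finset.sum_congr rfl fun t _ => hstep t, ← Finset.sum_mul]
    by_cases hcase : l = N - j
    · subst hcase
      rw [if_pos rfl]
      have hk : j + (N - j) = N := by omega
      rw [hk]
      have h1 : ∀ t ∈ Finset.range N, x ^ (2*N*t) = 1 := by
        intro t _; rw [pow_mul, hx2N, one_pow]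
      rw [Finset.sum_congr rfl h1, Finset.sum_const, Finset.card_range, hxN]
      simp
    · rw [if_neg hcase]
      have hnd : ¬ (N ∣ (j + l)) := by
        rintro ⟨d, hd⟩
        have h1 : N * d < N * 2 := by omega
        have hd2 : d < 2 := lt_of_mul_lt_mul_left h1 (Nat.zero_le N)
        interval_cases d <;> omega
      have h0 : ∑ t ∈ Finset.range N, x ^ (2*(j+l)*t) = 0 := by
        rw [show Finset.range N = Finset.range (2^κ) from by rw [hκ]]
        exact key_sum κ x (j+l)
          (by rw [show (2:ℕ)^κ = N from hκ.symm]; exact hxN)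
          (by rw [show (2:ℕ)^κ = N from hκ.symm]; exact hnd)
      rw [h0, zero_mul]
  -- rewrite each term of the outer sum
  have hterm : ∀ t ∈ Finset.range N,
      x ^ (j * (2*t+1)) * σ t (∑ i ∈ Finset.range N, x ^ (i * u t) * m i)
        = ∑ i ∈ Finset.range N, ∑ l ∈ Finset.range N,
            c i l • (x ^ i * x ^ ((j+l)*(2*t+1))) := by
    intro t ht
    rw [Finset.mem_range] at ht
    have hσpow : ∀ e : ℕ, σ t (x ^ e) = x ^ (e * (2*t+1)) := by
      intro e
      rw [map_pow, hσ t ht, ← pow_mul, mul_comm]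
    rw [map_sum, Finset.mul_sum]
    refine Finset.sum_congr rfl fun i hi => ?_
    rw [Finset.mem_range] at hi
    rw [map_mul, hσpow, hm i hi, map_sum, Finset.mul_sum, Finset.mul_sum]
    refine Finset.sum_congr rfl fun l hl => ?_
    rw [map_zsmul, hσpow]
    have hx1 : x ^ (i * u t * (2*t+1)) = x ^ i := by
      apply hxmod
      calc i * u t * (2*t+1) = i * (u t * (2*t+1)) := by ring
        _ ≡ i * 1 [MOD 2*N] := Nat.ModEq.mul_left i (hu t ht).2
        _ = i := by ring
    rw [mul_smul_comm, mul_smul_comm]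
    congr 1
    rw [hx1, ← mul_assoc, mul_comm (x ^ (j*(2*t+1))) (x ^ i), mul_assoc, ← pow_add]
    congr 2
    ring
  rw [Finset.sum_congr rfl hterm]
  rw [Finset.sum_comm]
  have hswap : ∀ i ∈ Finset.range N,
      ∑ t ∈ Finset.range N, ∑ l ∈ Finset.range N,
          c i l • (x ^ i * x ^ ((j+l)*(2*t+1)))
        = c i (N-j) • (x ^ i * -(N : Rq N)) := by
    intro i _
    rw [Finset.sum_comm]
    have hinner : ∀ l ∈ Finset.range N,
        ∑ t ∈ Finset.range N, c i l • (x ^ i * x ^ ((j+l)*(2*t+1)))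
          = if l = N - j then c i l • (x ^ i * -(N : Rq N)) else 0 := by
      intro l hl
      rw [← Finset.smul_sum, ← Finset.mul_sum, hT l hl]
      by_cases hcase : l = N - j
      · rw [if_pos hcase, if_pos hcase]
      · rw [if_neg hcase, if_neg hcase, mul_zero, smul_zero]
    rw [Finset.sum_congr rfl hinner, Finset.sum_ite_eq']
    rw [if_pos (Finset.mem_range.mpr (by omega))]
  rw [Finset.sum_congr rfl hswap, Finset.smul_sum, ← Finset.sum_neg_distrib]
  refine Finset.sum_congr rfl fun i _ => ?_
  simp only [mul_neg, smul_neg, neg_neg, zsmul_eq_mul]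
  push_cast
  ring
end

section
/- Let N ≥ 1 be a power of two, R = ℤ[X]/(X^N + 1), let p, q ≥ 1 be integers and m ≥ 1. Let s_0, …, s_{m−1} ∈ R (old keys), s'_0, …, s'_{2m−1} ∈ R (new keys), α_0, α_1 ∈ R, and B = (B_{r,j}) ∈ R^{2×2m} satisfy, for all 0 ≤ j < 2m: B_{0,j} ≡ −α_0·s'_j + p·s_j·[j < m] (mod p·q) and B_{1,j} ≡ −α_1·s'_j + p·s_{j−m}·[j ≥ m] (mod p·q), where [P] is 1 if P holds and 0 otherwise, and congruence modulo an integer r means the difference lies in r·R. Suppose a_0, a_1, b_0, …, b_{2m−1}, μ_0, …, μ_{2m−1} ∈ R satisfy a_0·s_j + b_j ≡ μ_j (mod q) for 0 ≤ j < m and a_1·s_{j−m} + b_j ≡ μ_j (mod q) for m ≤ j < 2m, and suppose a' ∈ R and c_0, …, c_{2m−1} ∈ R satisfy p·a' ≡ a_0·α_0 + a_1·α_1 (mod p·q) and p·c_j ≡ a_0·B_{0,j} + a_1·B_{1,j} (mod p·q) for all j. Then for every 0 ≤ j < 2m: a'·s'_j + (b_j + c_j) ≡ μ_j (mod q). -/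
/-!
Multiplying the claimed congruence by `p` turns it into a congruence modulo `p·q`, and there it is a
linear combination of the key relations: `p·(a'·s'_j + c_j) ≡ a_0·(p·s_j·[j < m]) + a_1·(p·s_{j-m}·[j ≥ m])`,
whose right-hand side is `p·a_0·s_j` or `p·a_1·s_{j-m}`, whichever input group owns slot `j`. As `R` is a free
`ℤ`-module, the factor `p` can then be cancelled, and the encryption relation of the input finishes.
-/

open Polynomial Finset

/-- For `N = 0` the ring is `ℤ[X]/(2)`, which is all `2`-torsion. -/
lemma Rq.isAddTorsionFree {N : ℕ} (hN : N ≠ 0) : IsAddTorsionFree (Rq N) :=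
  have hmonic : ((X : ℤ[X]) ^ N + 1).Monic := by simpa using monic_X_pow_add_C (1 : ℤ) hN
  have := (AdjoinRoot.powerBasis' hmonic).basis.isTorsionFree
  IsAddTorsionFree.of_isTorsionFree ℤ (Rq N)

lemma natCast_dvd_of_natCast_mul_dvd_natCast_mul {R : Type*} [CommRing R] [IsAddTorsionFree R]
    {p q : ℕ} (hp : p ≠ 0) {x : R} (h : ((p * q : ℕ) : R) ∣ p * x) : (q : R) ∣ x := by
  obtain ⟨u, hu⟩ := h
  refine ⟨u, nsmul_right_injective hp ?_⟩
  simpa only [nsmul_eq_mul, Nat.cast_mul, mul_assoc] using hu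

lemma dvd_mul_keySwitch_sub {R : Type*} [CommRing R] {d p a₀ a₁ α₀ α₁ B₀ B₁ a' c s' t₀ t₁ : R}
    (hB₀ : d ∣ B₀ - (-α₀ * s' + p * t₀)) (hB₁ : d ∣ B₁ - (-α₁ * s' + p * t₁))
    (ha' : d ∣ p * a' - (a₀ * α₀ + a₁ * α₁)) (hc : d ∣ p * c - (a₀ * B₀ + a₁ * B₁)) :
    d ∣ p * (a' * s' + c - (a₀ * t₀ + a₁ * t₁)) := by
  have hcomb : p * (a' * s' + c - (a₀ * t₀ + a₁ * t₁)) =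
      s' * (p * a' - (a₀ * α₀ + a₁ * α₁)) + (p * c - (a₀ * B₀ + a₁ * B₁)) +
        a₀ * (B₀ - (-α₀ * s' + p * t₀)) + a₁ * (B₁ - (-α₁ * s' + p * t₁)) := by ring
  rw [hcomb]
  exact (((ha'.mul_left _).add hc).add (hB₀.mul_left _)).add (hB₁.mul_left _)

theorem stmt14_general (N : ℕ) (hN1 : 1 ≤ N)
    (p q m : ℕ) (hp : 1 ≤ p)
    (s s' b μ c : ℕ → Rq N) (α : ℕ → Rq N) (B : ℕ → ℕ → Rq N)
    (a : ℕ → Rq N) (a' : Rq N)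
    (hB0 : ∀ j < 2 * m, ((p * q : ℕ) : Rq N) ∣
      (B 0 j - (-(α 0) * s' j + (p : Rq N) * s j * (if j < m then 1 else 0))))
    (hB1 : ∀ j < 2 * m, ((p * q : ℕ) : Rq N) ∣
      (B 1 j - (-(α 1) * s' j + (p : Rq N) * s (j - m) * (if m ≤ j then 1 else 0))))
    (henc0 : ∀ j < m, ((q : ℕ) : Rq N) ∣ (a 0 * s j + b j - μ j))
    (henc1 : ∀ j, m ≤ j → j < 2 * m →
      ((q : ℕ) : Rq N) ∣ (a 1 * s (j - m) + b j - μ j))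
    (ha' : ((p * q : ℕ) : Rq N) ∣ ((p : Rq N) * a' - (a 0 * α 0 + a 1 * α 1)))
    (hc : ∀ j < 2 * m, ((p * q : ℕ) : Rq N) ∣
      ((p : Rq N) * c j - (a 0 * B 0 j + a 1 * B 1 j))) :
    ∀ j < 2 * m, ((q : ℕ) : Rq N) ∣ (a' * s' j + (b j + c j) - μ j) := by
  intro j hj
  have := Rq.isAddTorsionFree (N := N) (by omega)
  have hB0j := hB0 j hj
  have hB1j := hB1 j hj
  rw [mul_assoc (p : Rq N)] at hB0j hB1j
  have hswitch := natCast_dvd_of_natCast_mul_dvd_natCast_mul (by omega)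
    (dvd_mul_keySwitch_sub hB0j hB1j ha' (hc j hj))
  rcases lt_or_ge j m with hjm | hjm
  · simp only [if_pos hjm, if_neg (show ¬m ≤ j by omega), mul_one, mul_zero, add_zero]
      at hswitch
    convert hswitch.add (henc0 j hjm) using 1
    ring
  · simp only [if_neg (show ¬j < m by omega), if_pos hjm, mul_one, mul_zero, zero_add]
      at hswitch
    convert hswitch.add (henc1 j hjm hj) using 1
    ring

/-- Exact-arithmetic correctness of one level of the fast (recursive)
shared-`s` to shared-`a` conversion (Algorithm 2). Congruence of elements of
`R = ℤ[X]/(X^N+1)` modulo an integer `r` is expressed as divisibility by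
`(r : R)`. Given old keys `s_0, …, s_{m-1}`, new keys `s'_0, …, s'_{2m-1}`,
a level key `((α_0, α_1), B)` with
`B_{0,j} ≡ -α_0·s'_j + p·s_j·[j < m] (mod pq)` and
`B_{1,j} ≡ -α_1·s'_j + p·s_{j-m}·[j ≥ m] (mod pq)`,
input ciphertexts with `a_0·s_j + b_j ≡ μ_j (mod q)` for `j < m` and
`a_1·s_{j-m} + b_j ≡ μ_j (mod q)` for `m ≤ j < 2m`, and outputs with
`p·a' ≡ a_0·α_0 + a_1·α_1 (mod pq)` and
`p·c_j ≡ a_0·B_{0,j} + a_1·B_{1,j} (mod pq)`, one has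
`a'·s'_j + (b_j + c_j) ≡ μ_j (mod q)` for all `j < 2m`. -/
theorem stmt14 (N : ℕ) (hN1 : 1 ≤ N) (hN : ∃ κ : ℕ, N = 2 ^ κ)
    (p q m : ℕ) (hp : 1 ≤ p) (hq : 1 ≤ q) (hm : 1 ≤ m)
    (s s' b μ c : ℕ → Rq N) (α : ℕ → Rq N) (B : ℕ → ℕ → Rq N)
    (a : ℕ → Rq N) (a' : Rq N)
    (hB0 : ∀ j < 2 * m, ((p * q : ℕ) : Rq N) ∣
      (B 0 j - (-(α 0) * s' j + (p : Rq N) * s j * (if j < m then 1 else 0))))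
    (hB1 : ∀ j < 2 * m, ((p * q : ℕ) : Rq N) ∣
      (B 1 j - (-(α 1) * s' j + (p : Rq N) * s (j - m) * (if m ≤ j then 1 else 0))))
    (henc0 : ∀ j < m, ((q : ℕ) : Rq N) ∣ (a 0 * s j + b j - μ j))
    (henc1 : ∀ j, m ≤ j → j < 2 * m →
      ((q : ℕ) : Rq N) ∣ (a 1 * s (j - m) + b j - μ j))
    (ha' : ((p * q : ℕ) : Rq N) ∣ ((p : Rq N) * a' - (a 0 * α 0 + a 1 * α 1)))
    (hc : ∀ j < 2 * m, ((p * q : ℕ) : Rq N) ∣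
      ((p : Rq N) * c j - (a 0 * B 0 j + a 1 * B 1 j))) :
    ∀ j < 2 * m, ((q : ℕ) : Rq N) ∣ (a' * s' j + (b j + c j) - μ j) :=
  stmt14_general N hN1 p q m hp s s' b μ c α B a a' hB0 hB1 henc0 henc1 ha' hc
end

section
/- Let k, N' ≥ 1 be integers, N = k·N', R = ℤ[X]/(X^N + 1) and R' = ℤ[Y]/(Y^{N'} + 1). For P ∈ R with power-basis coordinates P_0, …, P_{N−1} ∈ ℤ and for 0 ≤ i < k, let comp_i(P) ∈ R' be the element with power-basis coordinates (P_i, P_{i+k}, P_{i+2k}, …, P_{i+(N'−1)k}); equivalently, P = Σ_{0≤i<k} comp_i(P)(X^k)·X^i. Then for all a, s ∈ R and every 0 ≤ j < k: comp_j(a·s) = Σ_{0≤i<k} comp_i(a) · comp_{(j−i) mod k}(s) · Y^{e_{i,j}} in R', where e_{i,j} = 1 if i + ((j−i) mod k) ≥ k (equivalently, if i > j) and e_{i,j} = 0 otherwise. -/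
open Polynomial Finset

/-! Substituting `Y ↦ X^k` is a ring map `R' → R`, and every `P ∈ R` is
`∑_{i<k} comp_i(P)(X^k) · X^i`; as `1, X, …, X^{N-1}` is a `ℤ`-basis of `R`, a family
`(Q_i)_{i<k}` in `R'` is determined by `∑_{i<k} Q_i(X^k) · X^i`. Multiplying the decompositions of
`a` and `s`, a product `X^i · X^{i'}` with `i, i' < k` is `(X^k)^{e} · X^j` with
`j = (i + i') mod k`, `i' = (j - i) mod k` and `e = e_{i,j}`; regrouping by `j` gives a
decomposition of `a · s`, whose `j`-th part must then be `comp_j(a · s)`. -/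

theorem Finset.sum_range_mul_eq_sum_sum {M : Type*} [AddCommMonoid M] (f : ℕ → M) (k n : ℕ) :
    ∑ m ∈ range (k * n), f m = ∑ j ∈ range k, ∑ l ∈ range n, f (j + l * k) := by
  induction n with
  | zero => simp
  | succ n ih =>
    rw [Nat.mul_succ, sum_range_add, ih, ← sum_add_distrib]
    refine sum_congr rfl fun j _ => ?_
    rw [sum_range_succ, add_comm (k * n) j, mul_comm k n]

theorem Polynomial.monic_X_pow_add_one {R : Type*} [Semiring R] {n : ℕ} (hn : 0 < n) :
    (X ^ n + 1 : R[X]).Monic :=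
  leadingCoeff_X_pow_add_one hn

namespace Rq

variable {k N' N : ℕ}

theorem rx_pow_self (N : ℕ) : rx N ^ N = -1 := by
  have h := AdjoinRoot.eval₂_root ((X : ℤ[X]) ^ N + 1)
  simp only [eval₂_add, eval₂_pow, eval₂_X, eval₂_one] at h
  exact eq_neg_of_add_eq_zero_left h

noncomputable def basis (hN : 0 < N) : Module.Basis (Fin N) ℤ (Rq N) :=
  (AdjoinRoot.powerBasis' (monic_X_pow_add_one (R := ℤ) hN)).basis.reindex
    (finCongr (by simpa using natDegree_X_pow_add_C (n := N) (r := (1 : ℤ))))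

theorem basis_apply (hN : 0 < N) (i : Fin N) : basis hN i = rx N ^ (i : ℕ) := by
  rw [basis, Module.Basis.reindex_apply, PowerBasis.basis_eq_pow]
  rfl

theorem sum_basis_eq (hN : 0 < N) (c : ℕ → ℤ) :
    ∑ i : Fin N, c i • basis hN i = ∑ m ∈ range N, c m • rx N ^ m := by
  simp only [basis_apply, Fin.sum_univ_eq_sum_range (fun m => c m • rx N ^ m)]

theorem exists_eq_sum_smul_rx_pow (hN : 0 < N) (x : Rq N) :
    ∃ c : ℕ → ℤ, x = ∑ m ∈ range N, c m • rx N ^ m := by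
  refine ⟨fun m => if h : m < N then (basis hN).repr x ⟨m, h⟩ else 0, ?_⟩
  rw [← sum_basis_eq hN]
  simpa only [Fin.is_lt, dif_pos] using ((basis hN).sum_repr x).symm

theorem coeff_eq_of_sum_smul_rx_pow_eq (hN : 0 < N) {c d : ℕ → ℤ}
    (h : ∑ m ∈ range N, c m • rx N ^ m = ∑ m ∈ range N, d m • rx N ^ m) {m : ℕ} (hm : m < N) :
    c m = d m := by
  rw [← sum_basis_eq hN, ← sum_basis_eq hN] at h
  have := congrArg (fun x => (basis hN).repr x ⟨m, hm⟩) h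
  simpa only [Module.Basis.repr_sum_self] using this

noncomputable def expand (hN : N = k * N') : Rq N' →+* Rq N :=
  AdjoinRoot.lift (algebraMap ℤ (Rq N)) (rx N ^ k) (by
    simp only [eval₂_add, eval₂_pow, eval₂_X, eval₂_one, ← pow_mul, ← hN, rx_pow_self,
      neg_add_cancel])

theorem expand_rx (hN : N = k * N') : expand hN (rx N') = rx N ^ k :=
  AdjoinRoot.lift_root _

variable (k N') in
noncomputable def component (c : ℕ → ℤ) (i : ℕ) : Rq N' :=
  ∑ l ∈ range N', c (i + l * k) • rx N' ^ l

theorem sum_expand_component_mul (hN : N = k * N') (c : ℕ → ℤ) :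
    ∑ i ∈ range k, expand hN (component k N' c i) * rx N ^ i = ∑ m ∈ range N, c m • rx N ^ m := by
  subst hN
  rw [sum_range_mul_eq_sum_sum]
  refine sum_congr rfl fun i _ => ?_
  simp only [component, map_sum, map_zsmul, map_pow, expand_rx, sum_mul, smul_mul_assoc,
    ← pow_mul, ← pow_add, mul_comm k, add_comm i]

theorem exists_component_eq (hN' : 0 < N') (L : ℕ → Rq N') :
    ∃ c : ℕ → ℤ, ∀ i < k, component k N' c i = L i := by
  choose d hd using fun i => exists_eq_sum_smul_rx_pow hN' (L i)
  refine ⟨fun m => d (m % k) (m / k), fun i hi => ?_⟩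
  have hk : 0 < k := by omega
  simp only [component, hd i, Nat.add_mul_mod_self_right, Nat.mod_eq_of_lt hi,
    Nat.add_mul_div_right _ _ hk, Nat.div_eq_of_lt hi, zero_add]

theorem eq_of_sum_expand_mul_eq (hN : N = k * N') (hN' : 0 < N') {L L' : ℕ → Rq N'}
    (h : ∑ i ∈ range k, expand hN (L i) * rx N ^ i = ∑ i ∈ range k, expand hN (L' i) * rx N ^ i)
    {j : ℕ} (hj : j < k) : L j = L' j := by
  have hcoeffs : ∀ L : ℕ → Rq N', ∃ c : ℕ → ℤ, (∀ i < k, component k N' c i = L i) ∧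
      ∑ i ∈ range k, expand hN (L i) * rx N ^ i = ∑ m ∈ range N, c m • rx N ^ m := by
    intro L
    obtain ⟨c, hc⟩ := exists_component_eq (k := k) hN' L
    refine ⟨c, hc, ?_⟩
    rw [← sum_expand_component_mul hN]
    exact sum_congr rfl fun i hi => by rw [hc i (mem_range.mp hi)]
  obtain ⟨c, hc, hL⟩ := hcoeffs L
  obtain ⟨c', hc', hL'⟩ := hcoeffs L'
  rw [hL, hL'] at h
  rw [← hc j hj, ← hc' j hj]
  refine sum_congr rfl fun l hl => ?_
  have hlt : j + l * k < N := by
    rw [mem_range] at hl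
    subst hN
    nlinarith
  rw [coeff_eq_of_sum_smul_rx_pow_eq (by omega) h hlt]

end Rq

theorem Int.toNat_sub_emod_eq_ite {i j k : ℕ} (hi : i < k) (hj : j < k) :
    (((j : ℤ) - i) % k).toNat = if i ≤ j then j - i else j + k - i := by
  split_ifs with hij
  · rw [Int.emod_eq_of_lt (by omega) (by omega)]
    omega
  · rw [← Int.add_emod_right, Int.emod_eq_of_lt (by omega) (by omega)]
    omega

theorem sum_mul_sum_eq_sum_cyclic_conv {B : Type*} [CommSemiring B] (k : ℕ) (x : B) (a s : ℕ → B) :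
    (∑ i ∈ range k, a i * x ^ i) * (∑ i ∈ range k, s i * x ^ i) =
      ∑ j ∈ range k, (∑ i ∈ range k, a i * s (((j : ℤ) - i) % k).toNat *
        (x ^ k) ^ (if k ≤ i + (((j : ℤ) - i) % k).toNat then 1 else 0)) * x ^ j := by
  rw [sum_mul_sum]
  simp only [sum_mul]
  conv_rhs => rw [sum_comm]
  refine sum_congr rfl fun i hi => ?_
  rw [mem_range] at hi
  have hwrap_lt : ∀ i' < k, (if k ≤ i + i' then i + i' - k else i + i') < k := by
    intro i' hi'
    split_ifs <;> omega
  have hsub_wrap : ∀ i' < k,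
      ((((if k ≤ i + i' then i + i' - k else i + i' : ℕ) : ℤ) - i) % k).toNat = i' := by
    intro i' hi'
    rw [Int.toNat_sub_emod_eq_ite hi (hwrap_lt i' hi')]
    split_ifs <;> omega
  refine sum_nbij' (fun i' => if k ≤ i + i' then i + i' - k else i + i')
    (fun j => (((j : ℤ) - i) % k).toNat) (fun i' hi' => ?_) (fun j hj => ?_)
    (fun i' hi' => ?_) (fun j hj => ?_) (fun i' hi' => ?_) <;> rw [mem_range] at *
  · exact hwrap_lt i' hi'
  · rw [Int.toNat_sub_emod_eq_ite hi hj]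
    split_ifs <;> omega
  · exact hsub_wrap i' hi'
  · rw [Int.toNat_sub_emod_eq_ite hi hj]
    split_ifs <;> omega
  · simp only [hsub_wrap i' hi']
    split_ifs with hwrap
    · rw [pow_one, mul_assoc _ (x ^ k), ← pow_add, Nat.add_sub_cancel' hwrap, pow_add]
      ring
    · rw [pow_zero, mul_one, pow_add]
      ring

theorem stmt15_general (k N' N : ℕ) (hN' : 1 ≤ N') (hN : N = k * N')
    (a s : Rq N) (ca cs cp : ℕ → ℤ)
    (ha : a = ∑ l ∈ Finset.range N, ca l • rx N ^ l)
    (hs : s = ∑ l ∈ Finset.range N, cs l • rx N ^ l)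
    (hp : a * s = ∑ l ∈ Finset.range N, cp l • rx N ^ l)
    (j : ℕ) (hj : j < k) :
    (∑ l ∈ Finset.range N', cp (j + l * k) • rx N' ^ l) =
      ∑ i ∈ Finset.range k,
        (∑ l ∈ Finset.range N', ca (i + l * k) • rx N' ^ l) *
        (∑ l ∈ Finset.range N',
            cs ((((j : ℤ) - (i : ℤ)) % (k : ℤ)).toNat + l * k) • rx N' ^ l) *
        rx N' ^ (if k ≤ i + (((j : ℤ) - (i : ℤ)) % (k : ℤ)).toNat then 1 else 0) := by
  refine Rq.eq_of_sum_expand_mul_eq hN hN' (L := Rq.component k N' cp)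
    (L' := fun j => ∑ i ∈ range k, Rq.component k N' ca i *
      Rq.component k N' cs (((j : ℤ) - i) % k).toNat *
      rx N' ^ (if k ≤ i + (((j : ℤ) - i) % k).toNat then 1 else 0)) ?_ hj
  rw [Rq.sum_expand_component_mul, ← hp, ha, hs, ← Rq.sum_expand_component_mul hN ca,
    ← Rq.sum_expand_component_mul hN cs, sum_mul_sum_eq_sum_cyclic_conv]
  simp only [map_sum, map_mul, map_pow, Rq.expand_rx]

/-- Multiplication rule underlying the `ModDecomp` RLWE-to-MLWE conversion.
Let `N = k·N'`, `R = ℤ[X]/(X^N+1)`, `R' = ℤ[Y]/(Y^{N'}+1)`. For `P ∈ R` with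
power-basis coordinates `cP`, its `i`-th component `comp_i(P) ∈ R'` has
coordinates `cP i, cP (i+k), …, cP (i+(N'-1)k)`. Then for `a, s ∈ R` (with
coordinates `ca`, `cs`, and `cp` the coordinates of `a·s`) and `0 ≤ j < k`:
`comp_j(a·s) = ∑_{i<k} comp_i(a) · comp_{(j-i) mod k}(s) · Y^{e_{i,j}}`
where `e_{i,j} = 1` if `i + ((j-i) mod k) ≥ k` and `e_{i,j} = 0` otherwise. -/
theorem stmt15 (k N' N : ℕ) (hk : 1 ≤ k) (hN' : 1 ≤ N') (hN : N = k * N')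
    (a s : Rq N) (ca cs cp : ℕ → ℤ)
    (ha : a = ∑ l ∈ Finset.range N, ca l • rx N ^ l)
    (hs : s = ∑ l ∈ Finset.range N, cs l • rx N ^ l)
    (hp : a * s = ∑ l ∈ Finset.range N, cp l • rx N ^ l)
    (j : ℕ) (hj : j < k) :
    (∑ l ∈ Finset.range N', cp (j + l * k) • rx N' ^ l) =
      ∑ i ∈ Finset.range k,
        (∑ l ∈ Finset.range N', ca (i + l * k) • rx N' ^ l) *
        (∑ l ∈ Finset.range N',
            cs ((((j : ℤ) - (i : ℤ)) % (k : ℤ)).toNat + l * k) • rx N' ^ l) *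
        rx N' ^ (if k ≤ i + (((j : ℤ) - (i : ℤ)) % (k : ℤ)).toNat then 1 else 0) :=
  stmt15_general k N' N hN' hN a s ca cs cp ha hs hp j hj
end
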